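/- For λ > 0 and the lasso objective F(x,z,λ) = |z-x|²/(2λ) + |x| with minimizer x̂ = T^soft_λ(z), the limit lim_{x→x̂} |x - x̂|² / (2(F(x,z,λ) - F(x̂,z,λ))) exists for all z with |z| ≠ λ and equals λ if |z| > λ and equals 0 if |z| < λ. -/

import Mathlib

/-!
Write `F x = (z - x)² / (2λ) + |x|` and `x̂ = T^soft_λ(z)`. Expanding the square,
`2λ (F x - F x̂) = (x - x̂)² + 2 ((x - x̂)(x̂ - z) + λ (|x| - |x̂|))`.
If `|z| > λ`, then `x̂ ≠ 0` and `z - x̂ = λ sign x̂`, so near `x̂` the bracket vanishes identically: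
`F` is exactly the parabola `F x̂ + (x - x̂)² / (2λ)` there and the ratio is constantly `λ`.
If `|z| < λ`, then `x̂ = 0` and the kink of `|x|` dominates: the bracket is at least
`|x| (λ - |z|)`, so the ratio is `O(|x|)`.
-/

open Real Filter Topology

noncomputable def softThresh (lam z : ℝ) : ℝ :=
  if z > lam then z - lam else if z < -lam then z + lam else 0

noncomputable def lassoObjective (lam z x : ℝ) : ℝ :=
  |z - x| ^ 2 / (2 * lam) + |x|

/-- The quotient whose limit at `x → y` is `σ²(z, λ)` when `y = T^soft_λ(z)`. -/
noncomputable def curvatureRatio (lam z y x : ℝ) : ℝ :=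
  |x - y| ^ 2 / (2 * (lassoObjective lam z x - lassoObjective lam z y))

section

variable {lam z : ℝ}

theorem softThresh_of_lt (h : lam < z) : softThresh lam z = z - lam := if_pos h

theorem softThresh_of_lt_neg (hlam : 0 ≤ lam) (h : z < -lam) : softThresh lam z = z + lam := by
  rw [softThresh, if_neg (by linarith), if_pos h]

theorem softThresh_of_abs_le (h : |z| ≤ lam) : softThresh lam z = 0 := by
  rw [abs_le] at h
  rw [softThresh, if_neg (by linarith), if_neg (by linarith)]

theorem two_mul_lassoObjective_sub (hlam : lam ≠ 0) (x y : ℝ) :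
    2 * (lassoObjective lam z x - lassoObjective lam z y) =
      ((x - y) ^ 2 + 2 * ((x - y) * (y - z) + lam * (|x| - |y|))) / lam := by
  unfold lassoObjective
  rw [sq_abs, sq_abs]
  field_simp
  ring

theorem tendsto_curvatureRatio_of_eventually_affine (hlam : lam ≠ 0) {y : ℝ}
    (h : ∀ᶠ x in 𝓝 y, lam * (|x| - |y|) = (x - y) * (z - y)) :
    Tendsto (curvatureRatio lam z y) (𝓝[≠] y) (𝓝 lam) := by
  refine tendsto_const_nhds.congr' ?_
  filter_upwards [nhdsWithin_le_nhds h, self_mem_nhdsWithin] with x hx hxy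
  have hxy' : (x - y) ^ 2 ≠ 0 := pow_ne_zero 2 (sub_ne_zero.mpr hxy)
  have hF : 2 * (lassoObjective lam z x - lassoObjective lam z y) = (x - y) ^ 2 / lam := by
    rw [two_mul_lassoObjective_sub hlam, hx]
    ring
  rw [curvatureRatio, hF, sq_abs, div_div_cancel₀ hxy']

theorem tendsto_curvatureRatio_of_lt (hlam : lam ≠ 0) (hz : lam < z) :
    Tendsto (curvatureRatio lam z (z - lam)) (𝓝[≠] (z - lam)) (𝓝 lam) := by
  refine tendsto_curvatureRatio_of_eventually_affine hlam ?_
  filter_upwards [eventually_gt_nhds (sub_pos.mpr hz)] with x hx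
  rw [abs_of_pos hx, abs_of_pos (sub_pos.mpr hz)]
  ring

theorem tendsto_curvatureRatio_of_lt_neg (hlam : lam ≠ 0) (hz : z < -lam) :
    Tendsto (curvatureRatio lam z (z + lam)) (𝓝[≠] (z + lam)) (𝓝 lam) := by
  have hy : z + lam < 0 := by linarith
  refine tendsto_curvatureRatio_of_eventually_affine hlam ?_
  filter_upwards [eventually_lt_nhds hy] with x hx
  rw [abs_of_neg hx, abs_of_neg hy]
  ring

theorem two_mul_abs_mul_le_mul_lassoObjective_sub_zero (hlam : lam ≠ 0) (x : ℝ) :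
    2 * |x| * (lam - |z|) ≤ lam * (2 * (lassoObjective lam z x - lassoObjective lam z 0)) := by
  have hzx : z * x ≤ |z| * |x| := (le_abs_self _).trans (abs_mul z x).le
  rw [two_mul_lassoObjective_sub hlam, mul_div_cancel₀ _ hlam, abs_zero]
  nlinarith [sq_nonneg x]

theorem tendsto_curvatureRatio_zero (hz : |z| < lam) :
    Tendsto (curvatureRatio lam z 0) (𝓝[≠] 0) (𝓝 0) := by
  have hlam : 0 < lam := (abs_nonneg z).trans_lt hz
  have hgap : 0 < lam - |z| := sub_pos.mpr hz
  have hbound : ∀ x ≠ (0 : ℝ),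
      0 < 2 * |x| * (lam - |z|) / lam ∧
        2 * |x| * (lam - |z|) / lam ≤ 2 * (lassoObjective lam z x - lassoObjective lam z 0) :=
    fun x hx => ⟨by positivity, (div_le_iff₀' hlam).mpr
      (two_mul_abs_mul_le_mul_lassoObjective_sub_zero hlam.ne' x)⟩
  have hlim : Tendsto (fun x : ℝ => lam / (2 * (lam - |z|)) * |x|) (𝓝[≠] 0) (𝓝 0) := by
    simpa using ((continuous_abs.const_mul _).tendsto' 0 _ (by simp)).mono_left
      nhdsWithin_le_nhds
  refine squeeze_zero' ?_ ?_ hlim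
  all_goals filter_upwards [self_mem_nhdsWithin] with x hx
  all_goals obtain ⟨hpos, hle⟩ := hbound x hx
  · exact div_nonneg (sq_nonneg _) (hpos.trans_le hle).le
  · calc curvatureRatio lam z 0 x ≤ |x| ^ 2 / (2 * |x| * (lam - |z|) / lam) := by
          rw [curvatureRatio, sub_zero]
          exact div_le_div_of_nonneg_left (sq_nonneg _) hpos hle
      _ = lam / (2 * (lam - |z|)) * |x| := by
          have : |x| ≠ 0 := abs_ne_zero.mpr hx
          field_simp

end

/-- Curvature limit `σ²(z,λ)` for the lasso objective `F(x) = (z-x)²/(2λ) + |x|`: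
`lim_{x → x̂} (x - x̂)² / (2 (F x - F x̂)) = λ` if `|z| > λ` and `= 0` if `|z| < λ`. -/
theorem softThresh_curvature_limit (lam z : ℝ) (hlam : 0 < lam) (hz : |z| ≠ lam) :
    Tendsto (fun x : ℝ =>
        |x - softThresh lam z| ^ 2 /
          (2 * ((|z - x| ^ 2 / (2 * lam) + |x|) -
            (|z - softThresh lam z| ^ 2 / (2 * lam) + |softThresh lam z|))))
      (nhdsWithin (softThresh lam z) {softThresh lam z}ᶜ)
      (nhds (if lam < |z| then lam else 0)) := by
  change Tendsto (curvatureRatio lam z (softThresh lam z)) _ _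
  rcases lt_or_gt_of_ne hz with hsmall | hlarge
  · rw [softThresh_of_abs_le hsmall.le, if_neg hsmall.not_gt]
    exact tendsto_curvatureRatio_zero hsmall
  rw [if_pos hlarge]
  rcases lt_abs.mp hlarge with hpos | hneg
  · rw [softThresh_of_lt hpos]
    exact tendsto_curvatureRatio_of_lt hlam.ne' hpos
  · rw [softThresh_of_lt_neg hlam.le (by linarith)]
    exact tendsto_curvatureRatio_of_lt_neg hlam.ne' (by linarith)
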